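/- arXiv:1705.00023 — 5 statements merged into one kernel-verified Lean document; each statement's English description precedes it below -/
import Mathlib

section
/- The set 𝔥^I = { h(A,v,u,y) : A ∈ gl(2,ℝ), v ∈ ℝ, u,y ∈ ℝ² } of 7×7 real matrices (with h defined as in the paper) is closed under the matrix commutator [X,Y] = XY - YX, hence forms a Lie subalgebra of gl(7,ℝ). -/
noncomputable section

open Real

/-- The matrix `h(A,v,u,y)` from the paper (0-indexed entries of `A`, `u`, `y`). -/
def hMat (A : Matrix (Fin 2) (Fin 2) ℝ) (v : ℝ) (u y : Fin 2 → ℝ) :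
    Matrix (Fin 7) (Fin 7) ℝ :=
  !![A.trace, -u 1, u 0, Real.sqrt 2 * v, 0, -y 0, -y 1;
     0, A 0 0, A 0 1, Real.sqrt 2 * u 0, y 0, 0, v;
     0, A 1 0, A 1 1, Real.sqrt 2 * u 1, y 1, -v, 0;
     0, 0, 0, 0, Real.sqrt 2 * v, Real.sqrt 2 * u 0, Real.sqrt 2 * u 1;
     0, 0, 0, 0, -A.trace, 0, 0;
     0, 0, 0, 0, u 1, -A 0 0, -A 1 0;
     0, 0, 0, 0, -u 0, -A 0 1, -A 1 1]

/-- 𝔥^I, the set of all matrices h(A,v,u,y). -/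
def hI : Set (Matrix (Fin 7) (Fin 7) ℝ) :=
  {M | ∃ (A : Matrix (Fin 2) (Fin 2) ℝ) (v : ℝ) (u y : Fin 2 → ℝ), M = hMat A v u y}


private lemma vec7 {α : Type*} (a0 a1 a2 a3 a4 a5 a6 : α) :
    (![a0,a1,a2,a3,a4,a5,a6] : Fin 7 → α) 0 = a0 ∧
    (![a0,a1,a2,a3,a4,a5,a6] : Fin 7 → α) 1 = a1 ∧
    (![a0,a1,a2,a3,a4,a5,a6] : Fin 7 → α) 2 = a2 ∧
    (![a0,a1,a2,a3,a4,a5,a6] : Fin 7 → α) 3 = a3 ∧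
    (![a0,a1,a2,a3,a4,a5,a6] : Fin 7 → α) 4 = a4 ∧
    (![a0,a1,a2,a3,a4,a5,a6] : Fin 7 → α) 5 = a5 ∧
    (![a0,a1,a2,a3,a4,a5,a6] : Fin 7 → α) 6 = a6 :=
  ⟨rfl, rfl, rfl, rfl, rfl, rfl, rfl⟩

@[simp] private lemma vec7_0 {α : Type*} (a0 a1 a2 a3 a4 a5 a6 : α) : (![a0,a1,a2,a3,a4,a5,a6] : Fin 7 → α) 0 = a0 := rfl
@[simp] private lemma vec7_1 {α : Type*} (a0 a1 a2 a3 a4 a5 a6 : α) : (![a0,a1,a2,a3,a4,a5,a6] : Fin 7 → α) 1 = a1 := rfl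
@[simp] private lemma vec7_2 {α : Type*} (a0 a1 a2 a3 a4 a5 a6 : α) : (![a0,a1,a2,a3,a4,a5,a6] : Fin 7 → α) 2 = a2 := rfl
@[simp] private lemma vec7_3 {α : Type*} (a0 a1 a2 a3 a4 a5 a6 : α) : (![a0,a1,a2,a3,a4,a5,a6] : Fin 7 → α) 3 = a3 := rfl
@[simp] private lemma vec7_4 {α : Type*} (a0 a1 a2 a3 a4 a5 a6 : α) : (![a0,a1,a2,a3,a4,a5,a6] : Fin 7 → α) 4 = a4 := rfl
@[simp] private lemma vec7_5 {α : Type*} (a0 a1 a2 a3 a4 a5 a6 : α) : (![a0,a1,a2,a3,a4,a5,a6] : Fin 7 → α) 5 = a5 := rfl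
@[simp] private lemma vec7_6 {α : Type*} (a0 a1 a2 a3 a4 a5 a6 : α) : (![a0,a1,a2,a3,a4,a5,a6] : Fin 7 → α) 6 = a6 := rfl

@[simp] private lemma vec7m_0 {α : Type*} (a0 a1 a2 a3 a4 a5 a6 : α) (h : (0:ℕ) < 7) : (![a0,a1,a2,a3,a4,a5,a6] : Fin 7 → α) ⟨0,h⟩ = a0 := rfl
@[simp] private lemma vec7m_1 {α : Type*} (a0 a1 a2 a3 a4 a5 a6 : α) (h : (1:ℕ) < 7) : (![a0,a1,a2,a3,a4,a5,a6] : Fin 7 → α) ⟨1,h⟩ = a1 := rfl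
@[simp] private lemma vec7m_2 {α : Type*} (a0 a1 a2 a3 a4 a5 a6 : α) (h : (2:ℕ) < 7) : (![a0,a1,a2,a3,a4,a5,a6] : Fin 7 → α) ⟨2,h⟩ = a2 := rfl
@[simp] private lemma vec7m_3 {α : Type*} (a0 a1 a2 a3 a4 a5 a6 : α) (h : (3:ℕ) < 7) : (![a0,a1,a2,a3,a4,a5,a6] : Fin 7 → α) ⟨3,h⟩ = a3 := rfl
@[simp] private lemma vec7m_4 {α : Type*} (a0 a1 a2 a3 a4 a5 a6 : α) (h : (4:ℕ) < 7) : (![a0,a1,a2,a3,a4,a5,a6] : Fin 7 → α) ⟨4,h⟩ = a4 := rfl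
@[simp] private lemma vec7m_5 {α : Type*} (a0 a1 a2 a3 a4 a5 a6 : α) (h : (5:ℕ) < 7) : (![a0,a1,a2,a3,a4,a5,a6] : Fin 7 → α) ⟨5,h⟩ = a5 := rfl
@[simp] private lemma vec7m_6 {α : Type*} (a0 a1 a2 a3 a4 a5 a6 : α) (h : (6:ℕ) < 7) : (![a0,a1,a2,a3,a4,a5,a6] : Fin 7 → α) ⟨6,h⟩ = a6 := rfl

set_option maxHeartbeats 400000 in
/-- 𝔥^I is closed under the matrix commutator, hence is a Lie subalgebra of gl(7,ℝ). -/
theorem hI_closed_under_commutator :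
    ∀ X ∈ hI, ∀ Y ∈ hI, X * Y - Y * X ∈ hI := by
  rintro X ⟨A, v, u, y, rfl⟩ Y ⟨B, w, s, z, rfl⟩
  refine ⟨!![A 0 1 * B 1 0 - A 1 0 * B 0 1,
            A 0 0 * B 0 1 - A 0 1 * B 0 0 + A 0 1 * B 1 1 - A 1 1 * B 0 1;
            -(A 0 0 * B 1 0) + A 1 0 * B 0 0 - A 1 0 * B 1 1 + A 1 1 * B 1 0,
            -(A 0 1 * B 1 0) + A 1 0 * B 0 1],
          A 0 0 * w + A 1 1 * w - B 0 0 * v - B 1 1 * v - 2 * s 0 * u 1 + 2 * s 1 * u 0,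
          ![A 0 0 * s 0 + A 0 1 * s 1 - B 0 0 * u 0 - B 0 1 * u 1,
            A 1 0 * s 0 + A 1 1 * s 1 - B 1 0 * u 0 - B 1 1 * u 1],
          ![2 * A 0 0 * z 0 + A 0 1 * z 1 + A 1 1 * z 0 - 2 * B 0 0 * y 0
              - B 0 1 * y 1 - B 1 1 * y 0 - 3 * s 0 * v + 3 * u 0 * w,
            A 0 0 * z 1 + A 1 0 * z 0 + 2 * A 1 1 * z 1 - B 0 0 * y 1
              - B 1 0 * y 0 - 2 * B 1 1 * y 1 - 3 * s 1 * v + 3 * u 1 * w], ?_⟩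
  have h2 : Real.sqrt 2 ^ 2 = 2 := Real.sq_sqrt (by norm_num)
  ext i j
  fin_cases i <;> fin_cases j
  all_goals simp only [hMat, Matrix.sub_apply, Matrix.mul_apply, Fin.sum_univ_seven,
    Matrix.of_apply, vec7_0, vec7_1, vec7_2, vec7_3, vec7_4, vec7_5, vec7_6,
    vec7m_0, vec7m_1, vec7m_2, vec7m_3, vec7m_4, vec7m_5, vec7m_6,
    Matrix.cons_val_zero, Matrix.cons_val_one, Matrix.head_cons, Matrix.trace_fin_two]
  all_goals try ring1
  all_goals ring_nf
  all_goals rw [h2]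
  all_goals ring1
end
end

section
/- With 𝔪 = { h(0,v,u,y) : v ∈ ℝ, u,y ∈ ℝ² } ⊂ gl(7,ℝ) (h as in the paper), 𝔪 is a three-step nilpotent Lie algebra: [𝔪,[𝔪,𝔪]] ≠ 0 but [𝔪,[𝔪,[𝔪,𝔪]]] = 0, where brackets are matrix commutators. -/
noncomputable section

open Real

lemma sqrt2_sq : Real.sqrt 2 * Real.sqrt 2 = 2 := Real.mul_self_sqrt (by norm_num)

lemma s2 (a b : ℝ) : Real.sqrt 2 * a * (Real.sqrt 2 * b) = 2 * (a * b) := by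
  rw [mul_mul_mul_comm, sqrt2_sq]

lemma cv_2_2 {α : Type*} (a : α) (s : Fin 2 → α) : Matrix.vecCons a s 2 = s 1 := rfl
lemma cv_3_2 {α : Type*} (a : α) (s : Fin 3 → α) : Matrix.vecCons a s 2 = s 1 := rfl
lemma cv_3_3 {α : Type*} (a : α) (s : Fin 3 → α) : Matrix.vecCons a s 3 = s 2 := rfl
lemma cv_4_2 {α : Type*} (a : α) (s : Fin 4 → α) : Matrix.vecCons a s 2 = s 1 := rfl
lemma cv_4_3 {α : Type*} (a : α) (s : Fin 4 → α) : Matrix.vecCons a s 3 = s 2 := rfl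
lemma cv_4_4 {α : Type*} (a : α) (s : Fin 4 → α) : Matrix.vecCons a s 4 = s 3 := rfl
lemma cv_5_2 {α : Type*} (a : α) (s : Fin 5 → α) : Matrix.vecCons a s 2 = s 1 := rfl
lemma cv_5_3 {α : Type*} (a : α) (s : Fin 5 → α) : Matrix.vecCons a s 3 = s 2 := rfl
lemma cv_5_4 {α : Type*} (a : α) (s : Fin 5 → α) : Matrix.vecCons a s 4 = s 3 := rfl
lemma cv_5_5 {α : Type*} (a : α) (s : Fin 5 → α) : Matrix.vecCons a s 5 = s 4 := rfl
lemma cv_6_2 {α : Type*} (a : α) (s : Fin 6 → α) : Matrix.vecCons a s 2 = s 1 := rfl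
lemma cv_6_3 {α : Type*} (a : α) (s : Fin 6 → α) : Matrix.vecCons a s 3 = s 2 := rfl
lemma cv_6_4 {α : Type*} (a : α) (s : Fin 6 → α) : Matrix.vecCons a s 4 = s 3 := rfl
lemma cv_6_5 {α : Type*} (a : α) (s : Fin 6 → α) : Matrix.vecCons a s 5 = s 4 := rfl
lemma cv_6_6 {α : Type*} (a : α) (s : Fin 6 → α) : Matrix.vecCons a s 6 = s 5 := rfl

lemma vec7_five {α : Type*} (a b c d e f g : α) : ![a,b,c,d,e,f,g] 5 = f := rfl
lemma vec7_six {α : Type*} (a b c d e f g : α) : ![a,b,c,d,e,f,g] 6 = g := rfl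

set_option maxHeartbeats 2000000 in
lemma bracket (v v' : ℝ) (u y u' y' : Fin 2 → ℝ) :
    hMat 0 v u y * hMat 0 v' u' y' - hMat 0 v' u' y' * hMat 0 v u y
      = hMat 0 (2 * (u 0 * u' 1 - u 1 * u' 0)) ![0, 0]
          ![3 * (v' * u 0 - v * u' 0), 3 * (v' * u 1 - v * u' 1)] := by
  have h2 := sqrt2_sq
  ext i j
  fin_cases i <;> fin_cases j <;>
    simp [hMat, Matrix.mul_apply, Fin.sum_univ_seven, vec7_five, vec7_six, s2, cv_2_2, cv_3_2, cv_3_3, cv_4_2, cv_4_3, cv_4_4, cv_5_2, cv_5_3, cv_5_4, cv_5_5, cv_6_2, cv_6_3, cv_6_4, cv_6_5, cv_6_6] <;> (try rfl) <;> (try ring)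

lemma bracket2 (v c : ℝ) (u y y' : Fin 2 → ℝ) :
    hMat 0 v u y * hMat 0 c ![0, 0] y' - hMat 0 c ![0, 0] y' * hMat 0 v u y
      = hMat 0 0 ![0, 0] ![3 * (c * u 0), 3 * (c * u 1)] := by
  rw [bracket]; norm_num

lemma hzero : hMat 0 0 ![0, 0] ![0, 0] = (0 : Matrix (Fin 7) (Fin 7) ℝ) := by
  ext i j
  fin_cases i <;> fin_cases j <;> simp [hMat, vec7_five, vec7_six, cv_2_2, cv_3_2, cv_3_3, cv_4_2, cv_4_3, cv_4_4, cv_5_2, cv_5_3, cv_5_4, cv_5_5, cv_6_2, cv_6_3, cv_6_4, cv_6_5, cv_6_6] <;> rfl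

lemma bracket3 (v c : ℝ) (u y y' : Fin 2 → ℝ) (hc : c = 0) :
    hMat 0 v u y * hMat 0 c ![0, 0] y' - hMat 0 c ![0, 0] y' * hMat 0 v u y
      = 0 := by
  subst hc; rw [bracket]; norm_num [hzero]

def mSet : Set (Matrix (Fin 7) (Fin 7) ℝ) :=
  {M | ∃ (v : ℝ) (u y : Fin 2 → ℝ), M = hMat 0 v u y}

/-- 𝔪 is three-step nilpotent: [𝔪,[𝔪,𝔪]] ≠ 0 but [𝔪,[𝔪,[𝔪,𝔪]]] = 0. -/
theorem m_three_step_nilpotent :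
    (∃ X ∈ mSet, ∃ Y ∈ mSet, ∃ Z ∈ mSet,
      X * (Y * Z - Z * Y) - (Y * Z - Z * Y) * X ≠ 0) ∧
    (∀ W ∈ mSet, ∀ X ∈ mSet, ∀ Y ∈ mSet, ∀ Z ∈ mSet,
      W * (X * (Y * Z - Z * Y) - (Y * Z - Z * Y) * X)
        - (X * (Y * Z - Z * Y) - (Y * Z - Z * Y) * X) * W = 0) := by
  constructor
  · refine ⟨hMat 0 0 ![1, 0] ![0, 0], ⟨0, ![1, 0], ![0, 0], rfl⟩,
      hMat 0 0 ![1, 0] ![0, 0], ⟨0, ![1, 0], ![0, 0], rfl⟩,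
      hMat 0 0 ![0, 1] ![0, 0], ⟨0, ![0, 1], ![0, 0], rfl⟩, ?_⟩
    rw [bracket, bracket2]
    intro h
    have h5 := congrFun (congrFun h 0) 5
    norm_num [hMat, vec7_five] at h5
  · rintro W ⟨vW, uW, yW, rfl⟩ X ⟨vX, uX, yX, rfl⟩ Y ⟨vY, uY, yY, rfl⟩ Z ⟨vZ, uZ, yZ, rfl⟩
    rw [bracket, bracket2, bracket3]
    norm_num
end
end

section
/- The 3-form ω = √2(e^{167} + e^{235}) - e⁴ ∧ (e^{15} - e^{26} - e^{37}) on ℝ⁷ is annihilated by every element of 𝔥^I; that is, for every A ∈ gl(2,ℝ), v ∈ ℝ, u,y ∈ ℝ², the natural action of the matrix X = h(A,v,u,y) on Λ³(ℝ⁷)* (by (X·ω)(a,b,c) = -ω(Xa,b,c) - ω(a,Xb,c) - ω(a,b,Xc)) satisfies X·ω = 0. -/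
noncomputable section

open Real

/-- e^{ijk}(a,b,c), the wedge of dual basis vectors evaluated on (a,b,c). -/
def w3 (i j k : Fin 7) (a b c : Fin 7 → ℝ) : ℝ :=
  Matrix.det !![a i, a j, a k; b i, b j, b k; c i, c j, c k]

/-- ω = √2(e^{167} + e^{235}) - e⁴ ∧ (e^{15} - e^{26} - e^{37}). -/
def omega3 (a b c : Fin 7 → ℝ) : ℝ :=
  Real.sqrt 2 * (w3 0 5 6 a b c + w3 1 2 4 a b c)
    - (w3 3 0 4 a b c - w3 3 1 5 a b c - w3 3 2 6 a b c)

lemma cons_val_five {m : ℕ} {α : Type*} (x : α) (u : Fin (m+5) → α) :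
    Matrix.vecCons x u 5 =
      Matrix.vecHead (Matrix.vecTail (Matrix.vecTail (Matrix.vecTail (Matrix.vecTail u)))) :=
  rfl

lemma cons_val_six {m : ℕ} {α : Type*} (x : α) (u : Fin (m+6) → α) :
    Matrix.vecCons x u 6 =
      Matrix.vecHead (Matrix.vecTail (Matrix.vecTail (Matrix.vecTail (Matrix.vecTail (Matrix.vecTail u))))) :=
  rfl

lemma mulVec_hMat (A : Matrix (Fin 2) (Fin 2) ℝ) (v : ℝ) (u y : Fin 2 → ℝ)
    (a : Fin 7 → ℝ) :
    (hMat A v u y).mulVec a =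
    ![(A 0 0 + A 1 1) * a 0 - u 1 * a 1 + u 0 * a 2 + Real.sqrt 2 * v * a 3
        - y 0 * a 5 - y 1 * a 6,
      A 0 0 * a 1 + A 0 1 * a 2 + Real.sqrt 2 * u 0 * a 3 + y 0 * a 4 + v * a 6,
      A 1 0 * a 1 + A 1 1 * a 2 + Real.sqrt 2 * u 1 * a 3 + y 1 * a 4 - v * a 5,
      Real.sqrt 2 * v * a 4 + Real.sqrt 2 * u 0 * a 5 + Real.sqrt 2 * u 1 * a 6,
      -(A 0 0 + A 1 1) * a 4,
      u 1 * a 4 - A 0 0 * a 5 - A 1 0 * a 6,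
      -u 0 * a 4 - A 0 1 * a 5 - A 1 1 * a 6] := by
  funext i
  fin_cases i <;>
    simp [hMat, Matrix.mulVec, dotProduct, Fin.sum_univ_seven,
      Matrix.trace_fin_two, cons_val_five, cons_val_six] <;> ring

lemma omega3_apply (a b c : Fin 7 → ℝ) :
    omega3 a b c =
    Real.sqrt 2 * ((a 0 * (b 5 * c 6 - b 6 * c 5) - a 5 * (b 0 * c 6 - b 6 * c 0)
        + a 6 * (b 0 * c 5 - b 5 * c 0))
      + (a 1 * (b 2 * c 4 - b 4 * c 2) - a 2 * (b 1 * c 4 - b 4 * c 1)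
        + a 4 * (b 1 * c 2 - b 2 * c 1)))
    - ((a 3 * (b 0 * c 4 - b 4 * c 0) - a 0 * (b 3 * c 4 - b 4 * c 3)
        + a 4 * (b 3 * c 0 - b 0 * c 3))
      - (a 3 * (b 1 * c 5 - b 5 * c 1) - a 1 * (b 3 * c 5 - b 5 * c 3)
        + a 5 * (b 3 * c 1 - b 1 * c 3))
      - (a 3 * (b 2 * c 6 - b 6 * c 2) - a 2 * (b 3 * c 6 - b 6 * c 3)
        + a 6 * (b 3 * c 2 - b 2 * c 3))) := by
  simp [omega3, w3, Matrix.det_fin_three]; ring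

set_option maxHeartbeats 2000000 in
/-- Every h(A,v,u,y) annihilates ω:
(X·ω)(a,b,c) = -ω(Xa,b,c) - ω(a,Xb,c) - ω(a,b,Xc) = 0. -/
theorem hMat_annihilates_omega (A : Matrix (Fin 2) (Fin 2) ℝ) (v : ℝ)
    (u y : Fin 2 → ℝ) (a b c : Fin 7 → ℝ) :
    -omega3 ((hMat A v u y).mulVec a) b c - omega3 a ((hMat A v u y).mulVec b) c
      - omega3 a b ((hMat A v u y).mulVec c) = 0 := by
  have hs : Real.sqrt 2 * Real.sqrt 2 = 2 := Real.mul_self_sqrt (by norm_num)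
  rw [mulVec_hMat, mulVec_hMat, mulVec_hMat, omega3_apply, omega3_apply, omega3_apply]
  simp only [Matrix.cons_val_zero, Matrix.cons_val_one, Matrix.head_cons, Matrix.head_fin_const,
    Matrix.cons_val_two, Matrix.cons_val_three, Matrix.cons_val_four, cons_val_five, cons_val_six,
    Matrix.cons_val_succ, Matrix.vecHead, Matrix.vecTail, Function.comp]
  linear_combination ((-1 * a 3 * b 5 * c 6 * v) + (1 * a 3 * b 6 * c 5 * v)
    + (-1 * a 3 * b 2 * c 4 * u 0) + (1 * a 3 * b 4 * c 2 * u 0) + (1 * a 3 * b 1 * c 4 * u 1)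
    + (-1 * a 3 * b 4 * c 1 * u 1) + (1 * a 5 * b 3 * c 6 * v) + (-1 * a 6 * b 3 * c 5 * v)
    + (-1 * a 1 * b 3 * c 4 * u 1) + (1 * a 2 * b 3 * c 4 * u 0) + (-1 * a 4 * b 3 * c 2 * u 0)
    + (1 * a 4 * b 3 * c 1 * u 1) + (-1 * a 5 * b 6 * c 3 * v) + (1 * a 6 * b 5 * c 3 * v)
    + (1 * a 1 * b 4 * c 3 * u 1) + (-1 * a 2 * b 4 * c 3 * u 0) + (-1 * a 4 * b 1 * c 3 * u 1)
    + (1 * a 4 * b 2 * c 3 * u 0)) * hs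
end
end

section
/- Let p = p(x₅,x₆), q₂ = q₂(x₃,…,x₇) be smooth with (q₂)_{x₄x₄} = 2(q₂)_{x₃x₇}, and suppose r̄₆ satisfies (r̄₆)_{x₃} = (q₂)_{x₃}p + √2(q₂)_{x₄} and (r̄₆)_{x₄} = (q₂)_{x₄}p + 2√2(q₂)_{x₇}. Fix smooth q̄₃ = q̄₃(x₅,x₆) and r̄₇ = r̄₇(x₅,x₆,x₇), and set q₃ = -p_{x₆}x₇ + q̄₃. Then the pair of equations (r̄₅)_{x₃} = ((q₂)_{x₃}p + √2(q₂)_{x₄})p + (q₂)_{x₇} and (r̄₅)_{x₄} = (1/√2)((r̄₆)_{x₇} - (r̄₇)_{x₆} + 3(q₂)_{x₇}p + (q₃)_{x₅}) + 2p_{x₆x₆}x₄ + (q₂)_{x₄}p² satisfies the compatibility condition: the x₄-derivative of the right-hand side of the first equation equals the x₃-derivative of the right-hand side of the second equation. -/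
noncomputable section

/-- Partial derivative of `f` at `x` in the `i`-th coordinate direction. -/
def pd {n : ℕ} (i : Fin n) (f : (Fin n → ℝ) → ℝ) (x : Fin n → ℝ) : ℝ :=
  fderiv ℝ f x (Pi.single i 1)

/- Coordinates on ℝ⁵: index 0 ↔ x₃, 1 ↔ x₄, 2 ↔ x₅, 3 ↔ x₆, 4 ↔ x₇. -/

section helpers

variable {n : ℕ}

lemma fderiv_zero_of_invariant {f : (Fin n → ℝ) → ℝ} (hf : Differentiable ℝ f)
    {v : Fin n → ℝ} (h : ∀ (x : Fin n → ℝ) (t : ℝ), f (x + t • v) = f x) (x : Fin n → ℝ) :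
    fderiv ℝ f x v = 0 := by
  have hline : HasDerivAt (fun t : ℝ => x + t • v) v 0 := by
    simpa using ((hasDerivAt_id (0:ℝ)).smul_const v).const_add x
  have hfd : HasFDerivAt f (fderiv ℝ f x) (x + (0:ℝ) • v) := by
    simpa using (hf x).hasFDerivAt
  have hc := hfd.comp_hasDerivAt 0 hline
  have h2 : (f ∘ fun t : ℝ => x + t • v) = fun _ => f x := funext (fun t => h x t)
  rw [h2] at hc
  simpa using hc.unique (hasDerivAt_const _ _)

lemma fderiv_invariant {f : (Fin n → ℝ) → ℝ} (hf : Differentiable ℝ f)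
    {v : Fin n → ℝ} (h : ∀ (x : Fin n → ℝ) (t : ℝ), f (x + t • v) = f x) (x : Fin n → ℝ) (t : ℝ) :
    fderiv ℝ f (x + t • v) = fderiv ℝ f x := by
  have hT : HasFDerivAt (fun y : Fin n → ℝ => y + t • v)
      (ContinuousLinearMap.id ℝ (Fin n → ℝ)) x :=
    (hasFDerivAt_id x).add_const (t • v)
  have hc := (hf (x + t • v)).hasFDerivAt.comp x hT
  have h2 : (f ∘ fun y => y + t • v) = f := funext (fun y => h y t)
  rw [h2] at hc
  have h3 := hc.unique (hf x).hasFDerivAt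
  rw [← h3]; ext w; simp

lemma contDiff_pd {f : (Fin n → ℝ) → ℝ} (hf : ContDiff ℝ (⊤ : ℕ∞) f) (j : Fin n) :
    ContDiff ℝ (⊤ : ℕ∞) (pd j f) :=
  (hf.fderiv_right ((by simp))).clm_apply contDiff_const

lemma pd_comm {f : (Fin n → ℝ) → ℝ} (hf : ContDiff ℝ (⊤ : ℕ∞) f) (i j : Fin n) (x : Fin n → ℝ) :
    pd i (fun z => pd j f z) x = pd j (fun z => pd i f z) x := by
  have hsymm : IsSymmSndFDerivAt ℝ f x :=
    hf.contDiffAt.isSymmSndFDerivAt (by rw [minSmoothness_of_isRCLikeNormedField]; exact WithTop.coe_le_coe.mpr (le_top : (2:ℕ∞) ≤ ⊤))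
  have hd : DifferentiableAt ℝ (fderiv ℝ f) x :=
    ((hf.fderiv_right (WithTop.coe_le_coe.mpr le_top)).differentiable (by simp : (1 : WithTop ℕ∞) ≠ 0)) x
  have key : ∀ u v : Fin n → ℝ,
      fderiv ℝ (fun z => fderiv ℝ f z v) x u = fderiv ℝ (fderiv ℝ f) x u v := by
    intro u v
    rw [fderiv_clm_apply hd (differentiableAt_const v)]
    simp
  simp only [pd]
  rw [key, key, hsymm.eq]

lemma pd_eq_zero_of_invariant {f : (Fin n → ℝ) → ℝ} (hf : Differentiable ℝ f) {i : Fin n}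
    (h : ∀ (y : Fin n → ℝ) (t : ℝ), f (y + t • (Pi.single i 1 : Fin n → ℝ)) = f y) (x : Fin n → ℝ) :
    pd i f x = 0 :=
  fderiv_zero_of_invariant hf h x

lemma pd_invariant {f : (Fin n → ℝ) → ℝ} (hf : Differentiable ℝ f)
    {v : Fin n → ℝ} (h : ∀ (y : Fin n → ℝ) (t : ℝ), f (y + t • v) = f y) (j : Fin n)
    (y : Fin n → ℝ) (t : ℝ) : pd j f (y + t • v) = pd j f y := by
  simp only [pd, fderiv_invariant hf h y t]

lemma addSingle_apply {i j : Fin n} (h : j ≠ i) (y : Fin n → ℝ) (t : ℝ) :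
    (y + t • (Pi.single i 1 : Fin n → ℝ)) j = y j := by
  simp [Pi.single_eq_of_ne h]

lemma pd_add {f g : (Fin n → ℝ) → ℝ} {x : Fin n → ℝ} (hf : DifferentiableAt ℝ f x)
    (hg : DifferentiableAt ℝ g x) (i : Fin n) :
    pd i (fun z => f z + g z) x = pd i f x + pd i g x := by
  simp [pd, fderiv_fun_add hf hg]

lemma pd_sub {f g : (Fin n → ℝ) → ℝ} {x : Fin n → ℝ} (hf : DifferentiableAt ℝ f x)
    (hg : DifferentiableAt ℝ g x) (i : Fin n) :
    pd i (fun z => f z - g z) x = pd i f x - pd i g x := by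
  simp [pd, fderiv_fun_sub hf hg]

lemma pd_mul {f g : (Fin n → ℝ) → ℝ} {x : Fin n → ℝ} (hf : DifferentiableAt ℝ f x)
    (hg : DifferentiableAt ℝ g x) (i : Fin n) :
    pd i (fun z => f z * g z) x = pd i f x * g x + f x * pd i g x := by
  simp [pd, fderiv_fun_mul hf hg]; ring

lemma pd_const (c : ℝ) (x : Fin n → ℝ) (i : Fin n) : pd i (fun _ => c) x = 0 := by
  simp [pd]

end helpers

/-- Compatibility of the system (Esyst3)–(Esyste): the x₄-derivative of the RHS of the
equation for (r̄₅)_{x₃} equals the x₃-derivative of the RHS of the equation for (r̄₅)_{x₄}. -/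
theorem compatibility_r5bar
    (p q₂ r₆bar q₃bar r₇bar : (Fin 5 → ℝ) → ℝ)
    (hp : ContDiff ℝ (⊤ : ℕ∞) p) (hq₂ : ContDiff ℝ (⊤ : ℕ∞) q₂) (hr₆ : ContDiff ℝ (⊤ : ℕ∞) r₆bar)
    (hq₃bar : ContDiff ℝ (⊤ : ℕ∞) q₃bar) (hr₇ : ContDiff ℝ (⊤ : ℕ∞) r₇bar)
    (hpdep : ∀ x y : Fin 5 → ℝ, x 2 = y 2 → x 3 = y 3 → p x = p y)
    (hq₃dep : ∀ x y : Fin 5 → ℝ, x 2 = y 2 → x 3 = y 3 → q₃bar x = q₃bar y)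
    (hr₇dep : ∀ x y : Fin 5 → ℝ, x 2 = y 2 → x 3 = y 3 → x 4 = y 4 → r₇bar x = r₇bar y)
    (hint : ∀ x, pd 1 (fun z => pd 1 q₂ z) x = 2 * pd 0 (fun z => pd 4 q₂ z) x)
    (h1 : ∀ x, pd 0 r₆bar x = pd 0 q₂ x * p x + Real.sqrt 2 * pd 1 q₂ x)
    (h2 : ∀ x, pd 1 r₆bar x = pd 1 q₂ x * p x + 2 * Real.sqrt 2 * pd 4 q₂ x) :
    ∀ x, pd 1 (fun z => (pd 0 q₂ z * p z + Real.sqrt 2 * pd 1 q₂ z) * p z + pd 4 q₂ z) x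
      = pd 0 (fun z =>
          (1 / Real.sqrt 2) * (pd 4 r₆bar z - pd 3 r₇bar z + 3 * pd 4 q₂ z * p z
            + pd 2 (fun w => -(pd 3 p w) * w 4 + q₃bar w) z)
          + 2 * pd 3 (fun w => pd 3 p w) z * z 1 + pd 1 q₂ z * (p z) ^ 2) x := by
  intro x
  have hdp : Differentiable ℝ p := hp.differentiable (by simp)
  -- invariance of the data along coordinate directions
  have e0p : ∀ (y : Fin 5 → ℝ) (t : ℝ), p (y + t • (Pi.single (0:Fin 5) 1 : Fin 5 → ℝ)) = p y := fun y t =>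
    hpdep _ _ (addSingle_apply (by decide) y t) (addSingle_apply (by decide) y t)
  have e1p : ∀ (y : Fin 5 → ℝ) (t : ℝ), p (y + t • (Pi.single (1:Fin 5) 1 : Fin 5 → ℝ)) = p y := fun y t =>
    hpdep _ _ (addSingle_apply (by decide) y t) (addSingle_apply (by decide) y t)
  have e4p : ∀ (y : Fin 5 → ℝ) (t : ℝ), p (y + t • (Pi.single (4:Fin 5) 1 : Fin 5 → ℝ)) = p y := fun y t =>
    hpdep _ _ (addSingle_apply (by decide) y t) (addSingle_apply (by decide) y t)
  have e0q₃ : ∀ (y : Fin 5 → ℝ) (t : ℝ), q₃bar (y + t • (Pi.single (0:Fin 5) 1 : Fin 5 → ℝ)) = q₃bar y :=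
    fun y t => hq₃dep _ _ (addSingle_apply (by decide) y t) (addSingle_apply (by decide) y t)
  have e0r₇ : ∀ (y : Fin 5 → ℝ) (t : ℝ), r₇bar (y + t • (Pi.single (0:Fin 5) 1 : Fin 5 → ℝ)) = r₇bar y :=
    fun y t => hr₇dep _ _ (addSingle_apply (by decide) y t) (addSingle_apply (by decide) y t)
      (addSingle_apply (by decide) y t)
  -- vanishing partial derivatives of p
  have hp0 : ∀ y, pd 0 p y = 0 := pd_eq_zero_of_invariant hdp e0p
  have hp1 : ∀ y, pd 1 p y = 0 := pd_eq_zero_of_invariant hdp e1p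
  have hp4 : ∀ y, pd 4 p y = 0 := pd_eq_zero_of_invariant hdp e4p
  -- coordinate functions are smooth
  have hcoord : ∀ j : Fin 5, ContDiff ℝ (⊤ : ℕ∞) (fun z : Fin 5 → ℝ => z j) := fun j =>
    (contDiff_pi.mp contDiff_id) j
  -- the auxiliary function g
  have hg : ContDiff ℝ (⊤ : ℕ∞) (fun w : Fin 5 → ℝ => -(pd 3 p w) * w 4 + q₃bar w) :=
    (((contDiff_pd hp 3).neg).mul (hcoord 4)).add hq₃bar
  have ginv : ∀ (y : Fin 5 → ℝ) (t : ℝ),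
      (fun w : Fin 5 → ℝ => -(pd 3 p w) * w 4 + q₃bar w) (y + t • (Pi.single (0:Fin 5) 1 : Fin 5 → ℝ))
        = (fun w : Fin 5 → ℝ => -(pd 3 p w) * w 4 + q₃bar w) y := by
    intro y t
    simp only
    rw [pd_invariant hdp e0p 3 y t, addSingle_apply (by decide), e0q₃]
  -- vanishing x₃-derivatives on the right-hand side
  have hzr₇ : pd 0 (fun z => pd 3 r₇bar z) x = 0 :=
    pd_eq_zero_of_invariant ((contDiff_pd hr₇ 3).differentiable (by simp))
      (pd_invariant (hr₇.differentiable (by simp)) e0r₇ 3) x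
  have hzg : pd 0 (fun z => pd 2 (fun w => -(pd 3 p w) * w 4 + q₃bar w) z) x = 0 :=
    pd_eq_zero_of_invariant ((contDiff_pd hg 2).differentiable (by simp))
      (pd_invariant (hg.differentiable (by simp)) ginv 2) x
  have hz33 : pd 0 (fun z => pd 3 (fun w => pd 3 p w) z) x = 0 :=
    pd_eq_zero_of_invariant ((contDiff_pd (contDiff_pd hp 3) 3).differentiable (by simp))
      (pd_invariant ((contDiff_pd hp 3).differentiable (by simp))
        (pd_invariant hdp e0p 3) 3) x
  have hzc : pd 0 (fun z : Fin 5 → ℝ => z 1) x = 0 :=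
    pd_eq_zero_of_invariant ((hcoord 1).differentiable (by simp))
      (fun y t => addSingle_apply (by decide) y t) x
  have hzpow : pd 0 (fun z => p z ^ 2) x = 0 :=
    pd_eq_zero_of_invariant ((hp.pow 2).differentiable (by simp))
      (fun y t => by simp only [e0p y t]) x
  -- symmetry of second derivatives
  have hc1 : pd 1 (fun z => pd 0 q₂ z) x = pd 0 (fun z => pd 1 q₂ z) x := pd_comm hq₂ 1 0 x
  have hc2 : pd 1 (fun z => pd 4 q₂ z) x = pd 4 (fun z => pd 1 q₂ z) x := pd_comm hq₂ 1 4 x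
  have hc3 : pd 0 (fun z => pd 4 q₂ z) x = pd 4 (fun z => pd 0 q₂ z) x := pd_comm hq₂ 0 4 x
  have hc4 : pd 0 (fun z => pd 4 r₆bar z) x = pd 4 (fun z => pd 0 r₆bar z) x := pd_comm hr₆ 0 4 x
  -- differentiability of all the atoms (used by `fun_prop` in the simp discharger)
  have hD0 : Differentiable ℝ (fun z => pd 0 q₂ z) := (contDiff_pd hq₂ 0).differentiable (by simp)
  have hD1 : Differentiable ℝ (fun z => pd 1 q₂ z) := (contDiff_pd hq₂ 1).differentiable (by simp)
  have hD4 : Differentiable ℝ (fun z => pd 4 q₂ z) := (contDiff_pd hq₂ 4).differentiable (by simp)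
  have hDr64 : Differentiable ℝ (fun z => pd 4 r₆bar z) :=
    (contDiff_pd hr₆ 4).differentiable (by simp)
  have hDr73 : Differentiable ℝ (fun z => pd 3 r₇bar z) :=
    (contDiff_pd hr₇ 3).differentiable (by simp)
  have hDg : Differentiable ℝ (fun z => pd 2 (fun w => -(pd 3 p w) * w 4 + q₃bar w) z) :=
    (contDiff_pd hg 2).differentiable (by simp)
  have hD33 : Differentiable ℝ (fun z => pd 3 (fun w => pd 3 p w) z) :=
    (contDiff_pd (contDiff_pd hp 3) 3).differentiable (by simp)
  have hDc : Differentiable ℝ (fun z : Fin 5 → ℝ => z 1) := (hcoord 1).differentiable (by simp)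
  have hDpow : Differentiable ℝ (fun z => p z ^ 2) := (hp.pow 2).differentiable (by simp)
  have hDp : Differentiable ℝ p := hdp
  -- expand both sides using linearity and the product rule
  rw [show (2 : ℝ) = Real.sqrt 2 * Real.sqrt 2 from
    (Real.mul_self_sqrt (by norm_num)).symm] at hint
  simp (disch := fun_prop) only [pd_add, pd_sub, pd_mul, pd_const]
  rw [hc4]
  have h1' : (fun z => pd 0 r₆bar z) = fun z => pd 0 q₂ z * p z + Real.sqrt 2 * pd 1 q₂ z :=
    funext h1
  rw [h1']
  simp (disch := fun_prop) only [pd_add, pd_mul, pd_const]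
  rw [hc1, hc2, hint x, hc3]
  rw [hp0, hp1, hp4, hzr₇, hzg, hz33, hzc, hzpow]
  have hs : Real.sqrt 2 ≠ 0 := by positivity
  field_simp
  have hss : Real.sqrt 2 * Real.sqrt 2 = 2 := Real.mul_self_sqrt (by norm_num)
  linear_combination ((Real.sqrt 2 ^ 2 + 2) * pd 4 (fun z => pd 0 q₂ z) x * p x) * hss
end
end

section
/- Let 𝔥 ⊂ gl(7,ℝ) be the Lie subalgebra generated (under matrix commutator) by the three elements h(A₅₆, v₁, (0,-1/2)ᵀ, y₁), h(A₅₇, v₂, (1/2,0)ᵀ, y₂), and h(A'₅₆, v₃, u₃, y₃), where A₅₆ = [[-1/√2, 0],[0,0]], A₅₇ = [[0,0],[-1,0]], A'₅₆ = [[0, -1/√2],[1 - 1/(2√2), 0]], for arbitrary fixed v₁,v₂,v₃ ∈ ℝ, u₃, y₁,y₂,y₃ ∈ ℝ². Then the projection of 𝔥 to the gl(2,ℝ)-component (sending h(A,v,u,y) ↦ A) is all of gl(2,ℝ). -/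
noncomputable section

open Real

attribute [local instance] LieRing.ofAssociativeRing

/-!
The matrices `h(A,v,u,y)` are closed under linear combinations and commutators, and their
`A`-components combine exactly as in `gl(2,ℝ)` (`hMat_lie`). Hence the `A`-components of the
elements of any Lie subalgebra of `gl(7,ℝ)` that lie in `𝔥^I` form a Lie subalgebra of `gl(2,ℝ)`.
For the algebra generated by the three curvature operators it contains `A₅₆`, `A₅₇`, `A'₅₆`, and
these three together with `⁅A₅₇, A'₅₆⁆ = diag(-1/√2, 1/√2)` span `gl(2,ℝ)`.
-/

theorem hMat_add (A B : Matrix (Fin 2) (Fin 2) ℝ) (v w : ℝ) (u p y z : Fin 2 → ℝ) :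
    hMat A v u y + hMat B w p z = hMat (A + B) (v + w) (u + p) (y + z) := by
  simp only [hMat, Fin.isValue, Matrix.of_add_of, Matrix.add_cons, Matrix.head_cons,
    Matrix.tail_cons, add_zero, Matrix.empty_add_empty, Matrix.trace_add, Pi.add_apply, neg_add_rev,
    Matrix.add_apply, EmbeddingLike.apply_eq_iff_eq, Matrix.vecCons_inj, and_true, true_and]
  and_intros <;> ring

theorem hMat_smul (r : ℝ) (A : Matrix (Fin 2) (Fin 2) ℝ) (v : ℝ) (u y : Fin 2 → ℝ) :
    r • hMat A v u y = hMat (r • A) (r * v) (r • u) (r • y) := by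
  simp only [hMat, Fin.isValue, Matrix.smul_of, Matrix.smul_cons, smul_eq_mul, mul_neg, mul_zero,
    Matrix.smul_empty, Matrix.trace_smul, Pi.smul_apply, Matrix.smul_apply,
    EmbeddingLike.apply_eq_iff_eq, Matrix.vecCons_inj, and_true, true_and]
  and_intros <;> ring

theorem hMat_zero : hMat 0 0 0 0 = 0 := by
  simpa using (hMat_smul 0 0 0 0 0).symm

theorem hMat_lie (A B : Matrix (Fin 2) (Fin 2) ℝ) (v w : ℝ) (u p y z : Fin 2 → ℝ) :
    ⁅hMat A v u y, hMat B w p z⁆ =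
      hMat ⁅A, B⁆
        (A.trace * w - B.trace * v - 2 * p 0 * u 1 + 2 * p 1 * u 0)
        ![A 0 0 * p 0 + A 0 1 * p 1 - B 0 0 * u 0 - B 0 1 * u 1,
          A 1 0 * p 0 + A 1 1 * p 1 - B 1 0 * u 0 - B 1 1 * u 1]
        ![2 * A 0 0 * z 0 + A 0 1 * z 1 + A 1 1 * z 0 - 2 * B 0 0 * y 0 - B 0 1 * y 1
            - B 1 1 * y 0 - 3 * p 0 * v + 3 * u 0 * w,
          A 0 0 * z 1 + A 1 0 * z 0 + 2 * A 1 1 * z 1 - B 0 0 * y 1 - B 1 0 * y 0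
            - 2 * B 1 1 * y 1 - 3 * p 1 * v + 3 * u 1 * w] := by
  have h2 : √2 * √2 = 2 := Real.mul_self_sqrt zero_le_two
  simp only [hMat, Matrix.trace_fin_two, Fin.isValue, neg_add_rev, Ring.lie_def, Matrix.cons_mul,
    Nat.succ_eq_add_one, Nat.reduceAdd, Matrix.vecMul_cons, Matrix.vecHead, Matrix.cons_val_zero,
    Matrix.smul_cons, smul_eq_mul, mul_neg, mul_zero, Matrix.smul_empty, Matrix.vecTail,
    Function.comp_apply, Fin.succ_zero_eq_one, Matrix.cons_val_one, neg_smul, Matrix.neg_cons,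
    neg_zero, Matrix.neg_empty, Fin.succ_one_eq_two, Matrix.cons_val, Fin.reduceSucc, zero_smul,
    neg_neg, Matrix.empty_vecMul, add_zero, Matrix.add_cons, Matrix.empty_add_empty, zero_add,
    Matrix.empty_mul, Equiv.symm_apply_apply, Matrix.of_sub_of, Matrix.sub_cons,
    Matrix.empty_sub_empty, sub_self, Matrix.trace_sub, Matrix.mul_apply, Fin.sum_univ_two,
    Matrix.cons_val_fin_one, neg_sub, Matrix.sub_apply, EmbeddingLike.apply_eq_iff_eq,
    Matrix.vecCons_inj, and_true, true_and]
  and_intros <;> grind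

/-- The image of `L ∩ 𝔥^I` under `h(A,v,u,y) ↦ A`. -/
def hProj (L : LieSubalgebra ℝ (Matrix (Fin 7) (Fin 7) ℝ)) :
    LieSubalgebra ℝ (Matrix (Fin 2) (Fin 2) ℝ) where
  carrier := {A | ∃ M ∈ L, ∃ v u y, M = hMat A v u y}
  zero_mem' := ⟨0, L.zero_mem, 0, 0, 0, hMat_zero.symm⟩
  add_mem' := by
    rintro A B ⟨_, hM, v, u, y, rfl⟩ ⟨_, hN, w, p, z, rfl⟩
    exact ⟨_, L.add_mem hM hN, _, _, _, hMat_add A B v w u p y z⟩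
  smul_mem' := by
    rintro r A ⟨_, hM, v, u, y, rfl⟩
    exact ⟨_, L.smul_mem r hM, _, _, _, hMat_smul r A v u y⟩
  lie_mem' := by
    rintro A B ⟨_, hM, v, u, y, rfl⟩ ⟨_, hN, w, p, z, rfl⟩
    exact ⟨_, L.lie_mem hM hN, _, _, _, hMat_lie A B v w u p y z⟩

theorem mem_hProj_lieSpan {S : Set (Matrix (Fin 7) (Fin 7) ℝ)} {A : Matrix (Fin 2) (Fin 2) ℝ}
    {v : ℝ} {u y : Fin 2 → ℝ} (h : hMat A v u y ∈ S) :
    A ∈ hProj (LieSubalgebra.lieSpan ℝ _ S) :=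
  ⟨_, LieSubalgebra.subset_lieSpan h, v, u, y, rfl⟩

def A₅₆ : Matrix (Fin 2) (Fin 2) ℝ := !![-1 / √2, 0; 0, 0]

def A₅₇ : Matrix (Fin 2) (Fin 2) ℝ := !![0, 0; -1, 0]

def A'₅₆ : Matrix (Fin 2) (Fin 2) ℝ := !![0, -1 / √2; 1 - 1 / (2 * √2), 0]

theorem lie_A₅₇_A'₅₆ : ⁅A₅₇, A'₅₆⁆ = !![-(√2)⁻¹, 0; 0, (√2)⁻¹] := by
  simp [A₅₇, A'₅₆, Ring.lie_def, neg_div]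

theorem eq_combination_of_generators (B : Matrix (Fin 2) (Fin 2) ℝ) :
    B = (-√2 * (B 0 0 + B 1 1)) • A₅₆ + (-√2 * B 0 1 * (1 - 1 / (2 * √2)) - B 1 0) • A₅₇
      + (-√2 * B 0 1) • A'₅₆ + (√2 * B 1 1) • ⁅A₅₇, A'₅₆⁆ := by
  rw [lie_A₅₇_A'₅₆]
  ext i j
  fin_cases i <;> fin_cases j <;> simp [A₅₆, A₅₇, A'₅₆] <;> field_simp
  ring

theorem lieSpan_generators_eq_top :
    LieSubalgebra.lieSpan ℝ _ {A₅₆, A₅₇, A'₅₆} = ⊤ := by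
  set K := LieSubalgebra.lieSpan ℝ _ {A₅₆, A₅₇, A'₅₆}
  have h₁ : A₅₆ ∈ K := LieSubalgebra.subset_lieSpan (Set.mem_insert _ _)
  have h₂ : A₅₇ ∈ K :=
    LieSubalgebra.subset_lieSpan (Set.mem_insert_of_mem _ (Set.mem_insert _ _))
  have h₃ : A'₅₆ ∈ K :=
    LieSubalgebra.subset_lieSpan (Set.mem_insert_of_mem _ (Set.mem_insert_of_mem _ rfl))
  refine eq_top_iff.2 fun B _ => ?_
  rw [eq_combination_of_generators B]
  exact add_mem (add_mem (add_mem (K.smul_mem _ h₁) (K.smul_mem _ h₂)) (K.smul_mem _ h₃))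
    (K.smul_mem _ (K.lie_mem h₂ h₃))

/-- The projection to gl(2,ℝ) of the Lie subalgebra generated by the three curvature
operators from Section 3.2 is all of gl(2,ℝ). -/
theorem projection_is_gl2 (v₁ v₂ v₃ : ℝ) (u₃ y₁ y₂ y₃ : Fin 2 → ℝ) :
    ∀ B : Matrix (Fin 2) (Fin 2) ℝ,
      ∃ M ∈ LieSubalgebra.lieSpan ℝ (Matrix (Fin 7) (Fin 7) ℝ)
        {hMat !![-1 / Real.sqrt 2, 0; 0, 0] v₁ ![0, -1/2] y₁,
         hMat !![0, 0; -1, 0] v₂ ![1/2, 0] y₂,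
         hMat !![0, -1 / Real.sqrt 2; 1 - 1 / (2 * Real.sqrt 2), 0] v₃ u₃ y₃},
        ∃ (v : ℝ) (u y : Fin 2 → ℝ), M = hMat B v u y := by
  intro B
  have generators_le : LieSubalgebra.lieSpan ℝ _ {A₅₆, A₅₇, A'₅₆} ≤
      hProj (LieSubalgebra.lieSpan ℝ _ {hMat A₅₆ v₁ ![0, -1/2] y₁, hMat A₅₇ v₂ ![1/2, 0] y₂,
        hMat A'₅₆ v₃ u₃ y₃}) := by
    rw [LieSubalgebra.lieSpan_le]
    rintro A (rfl | rfl | rfl)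
    · exact mem_hProj_lieSpan (Set.mem_insert _ _)
    · exact mem_hProj_lieSpan (Set.mem_insert_of_mem _ (Set.mem_insert _ _))
    · exact mem_hProj_lieSpan (Set.mem_insert_of_mem _ (Set.mem_insert_of_mem _ rfl))
  rw [lieSpan_generators_eq_top] at generators_le
  exact generators_le (LieSubalgebra.mem_top B)

end
end
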